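/- arXiv:1512.01767 — 2 statements merged into one kernel-verified Lean document; each statement's English description precedes it below -/
import Mathlib

section
/- Let 0 ≤ γ ≤ β < 1 be real numbers. For each integer n ≥ 2, set m_n = ⌈n^β⌉ and l_n = ⌈n^γ⌉, and let B_1, …, B_{l_n} be independent identically distributed random variables on a probability space taking values in {0,1} with P(B_j = 1) = 1/m_n. Then m_n² · P( ∑_{j=1}^{l_n} B_j ≥ log n ) tends to 0 as n → ∞. -/
/-! The count `∑ B_j` is at least `log n` only if some `k = ⌈log n⌉` of the `l ≤ m` indicators
all fire, so by independence and a union bound its probability is at most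
`C(l, k) m⁻ᵏ ≤ 1 / k!`. Since `m ≤ 2n` and `n ≤ eᵏ`, `m² / k! ≤ 4 (e²)ᵏ / k! → 0`. -/

open MeasureTheory ProbabilityTheory Filter Finset
open scoped ENNReal Nat

lemma ProbabilityTheory.iIndepFun.iIndepSet_preimage {Ω ι : Type*} [MeasurableSpace Ω]
    {μ : Measure Ω} {κ : ι → Type*} [∀ i, MeasurableSpace (κ i)] {f : ∀ i, Ω → κ i}
    (hf : iIndepFun f μ) {t : ∀ i, Set (κ i)} (ht : ∀ i, MeasurableSet (t i)) :
    iIndepSet (fun i => f i ⁻¹' t i) μ :=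
  (iIndepSet_iff _ μ).2 fun _ _ hs => hf.meas_biInter fun i hi =>
    MeasurableSpace.generateFrom_le
      (by rintro _ rfl; exact ⟨t i, ht i, rfl⟩) _ (hs i hi)

lemma setOf_le_sum_indicator_subset {Ω ι : Type*} [Fintype ι] (s : ι → Set Ω) (a : ℝ) :
    {ω | a ≤ ∑ i, (s i).indicator 1 ω} ⊆
      ⋃ T ∈ powersetCard ⌈a⌉₊ (univ : Finset ι), ⋂ i ∈ T, s i := by
  classical
  intro ω hω
  have hcard : ⌈a⌉₊ ≤ #{i | ω ∈ s i} := by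
    refine Nat.ceil_le.2 ?_
    simpa [Set.indicator_apply, Finset.sum_boole] using hω
  obtain ⟨T, hTS, hT⟩ := exists_subset_card_eq hcard
  exact Set.mem_biUnion (mem_powersetCard_univ.2 hT)
    (Set.mem_biInter fun i hi => (mem_filter.1 (hTS hi)).2)

lemma measureReal_le_sum_indicator_le {Ω ι : Type*} [MeasurableSpace Ω] {μ : Measure Ω}
    [Fintype ι] {s : ι → Set Ω} (hs : iIndepSet s μ) {p : ℝ} (hp : ∀ i, μ.real (s i) ≤ p)
    (a : ℝ) :
    μ.real {ω | a ≤ ∑ i, (s i).indicator 1 ω} ≤ (Fintype.card ι).choose ⌈a⌉₊ * p ^ ⌈a⌉₊ := by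
  have := hs.isProbabilityMeasure
  calc μ.real {ω | a ≤ ∑ i, (s i).indicator 1 ω}
      ≤ μ.real (⋃ T ∈ powersetCard ⌈a⌉₊ (univ : Finset ι), ⋂ i ∈ T, s i) :=
        measureReal_mono (setOf_le_sum_indicator_subset s a) (measure_ne_top _ _)
    _ ≤ ∑ T ∈ powersetCard ⌈a⌉₊ (univ : Finset ι), μ.real (⋂ i ∈ T, s i) :=
        measureReal_biUnion_finset_le _ _
    _ ≤ ∑ T ∈ powersetCard ⌈a⌉₊ (univ : Finset ι), p ^ ⌈a⌉₊ := by
        refine sum_le_sum fun T hT => ?_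
        rw [Measure.real, hs.meas_biInter, ENNReal.toReal_prod]
        refine (prod_le_prod (fun _ _ => ENNReal.toReal_nonneg) fun i _ => hp i).trans_eq ?_
        rw [prod_const, mem_powersetCard_univ.1 hT]
    _ = (Fintype.card ι).choose ⌈a⌉₊ * p ^ ⌈a⌉₊ := by
        rw [sum_const, card_powersetCard, card_univ, nsmul_eq_mul]

lemma Nat.choose_mul_inv_pow_le_inv_factorial {l m : ℕ} (hlm : l ≤ m) (k : ℕ) :
    (l.choose k : ℝ) * ((m : ℝ)⁻¹) ^ k ≤ (k ! : ℝ)⁻¹ :=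
  calc (l.choose k : ℝ) * ((m : ℝ)⁻¹) ^ k
      ≤ (m : ℝ) ^ k / k ! * ((m : ℝ)⁻¹) ^ k := by
        gcongr
        exact (Nat.cast_le.2 (Nat.choose_le_choose k hlm)).trans (Nat.choose_le_pow_div k m)
    _ = ((m : ℝ) * (m : ℝ)⁻¹) ^ k * (k ! : ℝ)⁻¹ := by ring
    _ ≤ (k ! : ℝ)⁻¹ :=
        mul_le_of_le_one_left (by positivity) (pow_le_one₀ (by positivity) mul_inv_le_one)

lemma natCeil_rpow_le_two_mul {x β : ℝ} (hx : 1 ≤ x) (hβ : β ≤ 1) :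
    (⌈x ^ β⌉₊ : ℝ) ≤ 2 * x := by
  have hpow : x ^ β ≤ x := by
    simpa using Real.rpow_le_rpow_of_exponent_le hx hβ
  linarith [Nat.ceil_lt_add_one (Real.rpow_nonneg (by linarith : (0:ℝ) ≤ x) β)]

lemma tendsto_pow_div_factorial_ceil_log (c : ℕ) :
    Tendsto (fun n : ℕ => (n : ℝ) ^ c / (⌈Real.log n⌉₊ ! : ℝ)) atTop (nhds 0) := by
  have hk : Tendsto (fun n : ℕ => ⌈Real.log n⌉₊) atTop atTop :=
    tendsto_nat_ceil_atTop.comp (Real.tendsto_log_atTop.comp tendsto_natCast_atTop_atTop)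
  refine squeeze_zero' (Eventually.of_forall fun n => by positivity) ?_
    ((FloorSemiring.tendsto_pow_div_factorial_atTop (Real.exp c)).comp hk)
  filter_upwards [eventually_ge_atTop 1] with n hn
  have hn : (0 : ℝ) < n := by exact_mod_cast hn
  have : (n : ℝ) ^ c ≤ Real.exp c ^ ⌈Real.log n⌉₊ :=
    calc (n : ℝ) ^ c = Real.exp (Real.log n) ^ c := by rw [Real.exp_log hn]
      _ ≤ Real.exp ⌈Real.log n⌉₊ ^ c := by gcongr; exact Nat.le_ceil _
      _ = Real.exp c ^ ⌈Real.log n⌉₊ := by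
        rw [← Real.exp_nat_mul, ← Real.exp_nat_mul, mul_comm]
  exact div_le_div_of_nonneg_right this (by positivity)

lemma measureReal_le_sum_le_inv_factorial {Ω ι : Type*} [MeasurableSpace Ω] {μ : Measure Ω}
    [Fintype ι] {B : ι → Ω → ℝ} (hval : ∀ i ω, B i ω = 0 ∨ B i ω = 1) (hindep : iIndepFun B μ)
    {m : ℕ} (hprob : ∀ i, μ {ω | B i ω = 1} = (m : ℝ≥0∞)⁻¹) (hm : Fintype.card ι ≤ m) (a : ℝ) :
    μ.real {ω | a ≤ ∑ i, B i ω} ≤ (⌈a⌉₊ ! : ℝ)⁻¹ := by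
  have hB (i) : B i = {ω | B i ω = 1}.indicator 1 := funext fun ω => by
    rcases hval i ω with h | h <;> simp [h]
  have hsets : iIndepSet (fun i => {ω | B i ω = 1}) μ :=
    hindep.iIndepSet_preimage fun _ => measurableSet_singleton 1
  have hp (i) : μ.real {ω | B i ω = 1} ≤ (m : ℝ)⁻¹ := by simp [Measure.real, hprob i]
  have hbound := measureReal_le_sum_indicator_le hsets hp a
  simp only [← hB] at hbound
  exact hbound.trans (Nat.choose_mul_inv_pow_le_inv_factorial hm _)

theorem stmt_6_general
    (β γ : ℝ) (hγβ : γ ≤ β) (hβ1 : β < 1)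
    (Ω : ℕ → Type*) [∀ n, MeasurableSpace (Ω n)]
    (μ : (n : ℕ) → Measure (Ω n)) [∀ n, IsProbabilityMeasure (μ n)]
    (B : (n : ℕ) → Fin ⌈(n : ℝ) ^ γ⌉₊ → Ω n → ℝ)
    (hval : ∀ n j ω, B n j ω = 0 ∨ B n j ω = 1)
    (hprob : ∀ n : ℕ, 2 ≤ n → ∀ j,
      μ n {ω | B n j ω = 1} = ((⌈(n : ℝ) ^ β⌉₊ : ℝ≥0∞))⁻¹)
    (hindep : ∀ n, iIndepFun (B n) (μ n)) :
    Tendsto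
      (fun n : ℕ => ((⌈(n : ℝ) ^ β⌉₊ : ℝ)) ^ 2
        * (μ n {ω | Real.log n ≤ ∑ j, B n j ω}).toReal)
      atTop (nhds 0) := by
  have hlim := (tendsto_pow_div_factorial_ceil_log 2).const_mul 4
  rw [mul_zero] at hlim
  refine squeeze_zero' (Eventually.of_forall fun n => by positivity) ?_ hlim
  filter_upwards [eventually_ge_atTop 2] with n hn
  have hn1 : (1 : ℝ) ≤ n := by exact_mod_cast hn.trans' one_le_two
  have hlm : Fintype.card (Fin ⌈(n : ℝ) ^ γ⌉₊) ≤ ⌈(n : ℝ) ^ β⌉₊ := by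
    simpa using Nat.ceil_mono (Real.rpow_le_rpow_of_exponent_le hn1 hγβ)
  calc ((⌈(n : ℝ) ^ β⌉₊ : ℝ)) ^ 2 * (μ n {ω | Real.log n ≤ ∑ j, B n j ω}).toReal
      ≤ (2 * n) ^ 2 * (⌈Real.log n⌉₊ ! : ℝ)⁻¹ := by
        gcongr
        · exact natCeil_rpow_le_two_mul hn1 hβ1.le
        · exact measureReal_le_sum_le_inv_factorial (hval n) (hindep n) (hprob n hn) hlm _
    _ = 4 * ((n : ℝ) ^ 2 / ⌈Real.log n⌉₊ !) := by ring

/-- **Key estimate for Regime A-1 in the proof of Lemma 5**: with `m_n = ⌈n^β⌉` and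
`l_n = ⌈n^γ⌉` (where `0 ≤ γ ≤ β < 1`), and i.i.d. `{0,1}`-valued `B_1, …, B_{l_n}`
with `P(B_j = 1) = 1/m_n`, one has `m_n² · P(∑ B_j ≥ log n) → 0` as `n → ∞`. -/
theorem stmt_6
    (β γ : ℝ) (hγ0 : 0 ≤ γ) (hγβ : γ ≤ β) (hβ1 : β < 1)
    (Ω : ℕ → Type*) [∀ n, MeasurableSpace (Ω n)]
    (μ : (n : ℕ) → Measure (Ω n)) [∀ n, IsProbabilityMeasure (μ n)]
    (B : (n : ℕ) → Fin ⌈(n : ℝ) ^ γ⌉₊ → Ω n → ℝ)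
    (hmeas : ∀ n j, Measurable (B n j))
    (hval : ∀ n j ω, B n j ω = 0 ∨ B n j ω = 1)
    (hprob : ∀ n : ℕ, 2 ≤ n → ∀ j,
      μ n {ω | B n j ω = 1} = ((⌈(n : ℝ) ^ β⌉₊ : ℝ≥0∞))⁻¹)
    (hindep : ∀ n, iIndepFun (B n) (μ n)) :
    Tendsto
      (fun n : ℕ => ((⌈(n : ℝ) ^ β⌉₊ : ℝ)) ^ 2
        * (μ n {ω | Real.log n ≤ ∑ j, B n j ω}).toReal)
      atTop (nhds 0) :=
  stmt_6_general β γ hγβ hβ1 Ω μ B hval hprob hindep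
end

section
/- Let 1/3 ≤ β < 1 and ε ∈ (0, 1/2) be real numbers. For each integer n ≥ 2, set m_n = ⌈n^β⌉ and N_n = ⌈(n/m_n)^{1/2−ε}⌉, and let B_1, …, B_{N_n} be independent identically distributed random variables on a probability space taking values in {0,1} with P(B_j = 1) = 1/m_n. Then m_n² · P( ∑_{j=1}^{N_n} B_j ≥ log n ) tends to 0 as n → ∞. -/
/-!
Chernoff's bound with parameter `t = 3` gives
`P(∑ B_j ≥ log n) ≤ n⁻³ · exp((e³ - 1) · N_n / m_n)`. Since `β ≥ 1/3` we have `n ≤ m_n³`, so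
`(n / m_n)^{1/2-ε} ≤ (m_n²)^{1/2} = m_n`, i.e. `N_n ≤ m_n`; and `m_n ≤ n` since `β < 1`.
Hence `m_n² · P(∑ B_j ≥ log n) ≤ exp(e³ - 1) / n`.
-/

open MeasureTheory ProbabilityTheory Filter Real
open scoped ENNReal

lemma exp_mul_eq_indicator_add_one {Ω : Type*} {X : Ω → ℝ} (hval : ∀ ω, X ω = 0 ∨ X ω = 1)
    (t : ℝ) :
    (fun ω => exp (t * X ω)) = fun ω => {ω | X ω = 1}.indicator (fun _ => exp t - 1) ω + 1 := by
  funext ω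
  rcases hval ω with h | h <;> simp [h]

section ZeroOne

variable {Ω : Type*} [MeasurableSpace Ω] {μ : Measure Ω}

lemma mgf_eq_of_zero_or_one [IsProbabilityMeasure μ] {X : Ω → ℝ} (hX : Measurable X)
    (hval : ∀ ω, X ω = 0 ∨ X ω = 1) (t : ℝ) :
    mgf X μ t = 1 + (exp t - 1) * μ.real {ω | X ω = 1} := by
  have hset : MeasurableSet {ω | X ω = 1} := hX (measurableSet_singleton 1)
  rw [mgf, exp_mul_eq_indicator_add_one hval,
    integral_add ((integrable_const _).indicator hset) (integrable_const _),
    integral_indicator_const _ hset, integral_const]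
  simp only [smul_eq_mul, probReal_univ, one_mul]
  ring

lemma mgf_le_exp_of_zero_or_one [IsProbabilityMeasure μ] {X : Ω → ℝ} (hX : Measurable X)
    (hval : ∀ ω, X ω = 0 ∨ X ω = 1) {t p : ℝ} (ht : 0 ≤ t) (hp : μ.real {ω | X ω = 1} ≤ p) :
    mgf X μ t ≤ exp ((exp t - 1) * p) := by
  have hc : 0 ≤ exp t - 1 := by linarith [one_le_exp ht]
  calc mgf X μ t = 1 + (exp t - 1) * μ.real {ω | X ω = 1} := mgf_eq_of_zero_or_one hX hval t
    _ ≤ 1 + (exp t - 1) * p := by gcongr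
    _ ≤ exp ((exp t - 1) * p) := by linarith [add_one_le_exp ((exp t - 1) * p)]

lemma integrable_exp_mul_of_zero_or_one [IsFiniteMeasure μ] {X : Ω → ℝ} (hX : Measurable X)
    (hval : ∀ ω, X ω = 0 ∨ X ω = 1) (t : ℝ) : Integrable (fun ω => exp (t * X ω)) μ := by
  rw [exp_mul_eq_indicator_add_one hval]
  exact ((integrable_const _).indicator (hX (measurableSet_singleton 1))).add (integrable_const _)

theorem measureReal_le_sum_le_of_zero_or_one [IsProbabilityMeasure μ] {ι : Type*} [Fintype ι]
    {X : ι → Ω → ℝ} (hindep : iIndepFun X μ) (hmeas : ∀ i, Measurable (X i))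
    (hval : ∀ i ω, X i ω = 0 ∨ X i ω = 1) {t p : ℝ} (ht : 0 ≤ t)
    (hp : ∀ i, μ.real {ω | X i ω = 1} ≤ p) (a : ℝ) :
    μ.real {ω | a ≤ ∑ i, X i ω} ≤ exp (-t * a + (exp t - 1) * p * Fintype.card ι) := by
  have hint : Integrable (fun ω => exp (t * (∑ i, X i) ω)) μ :=
    hindep.integrable_exp_mul_sum hmeas fun i _ =>
      integrable_exp_mul_of_zero_or_one (hmeas i) (hval i) t
  have hmgf : mgf (∑ i, X i) μ t ≤ exp ((exp t - 1) * p * Fintype.card ι) := by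
    calc mgf (∑ i, X i) μ t = ∏ i, mgf (X i) μ t := hindep.mgf_sum hmeas _
      _ ≤ ∏ _i : ι, exp ((exp t - 1) * p) :=
        Finset.prod_le_prod (fun i _ => mgf_nonneg) fun i _ =>
          mgf_le_exp_of_zero_or_one (hmeas i) (hval i) ht (hp i)
      _ = exp ((exp t - 1) * p * Fintype.card ι) := by
        rw [Finset.prod_const, Finset.card_univ, ← exp_nat_mul, mul_comm]
  calc μ.real {ω | a ≤ ∑ i, X i ω} = μ.real {ω | a ≤ (∑ i, X i) ω} := by
        simp only [Finset.sum_apply]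
    _ ≤ exp (-t * a) * mgf (∑ i, X i) μ t := measure_ge_le_exp_mul_mgf a ht hint
    _ ≤ exp (-t * a) * exp ((exp t - 1) * p * Fintype.card ι) := by gcongr
    _ = exp (-t * a + (exp t - 1) * p * Fintype.card ι) := (exp_add _ _).symm

end ZeroOne

lemma natCeil_rpow_le_self {n : ℕ} (hn : 1 ≤ n) {β : ℝ} (hβ : β ≤ 1) : ⌈(n : ℝ) ^ β⌉₊ ≤ n := by
  refine Nat.ceil_le.mpr ?_
  calc (n : ℝ) ^ β ≤ (n : ℝ) ^ (1 : ℝ) :=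
        rpow_le_rpow_of_exponent_le (by exact_mod_cast hn) hβ
    _ = n := rpow_one _

lemma le_natCeil_rpow_pow_three {n : ℕ} (hn : 1 ≤ n) {β : ℝ} (hβ : 1 / 3 ≤ β) :
    (n : ℝ) ≤ (⌈(n : ℝ) ^ β⌉₊ : ℝ) ^ 3 := by
  have hn' : (1 : ℝ) ≤ n := by exact_mod_cast hn
  calc (n : ℝ) = (n : ℝ) ^ (1 : ℝ) := (rpow_one _).symm
    _ ≤ (n : ℝ) ^ (β * (3 : ℕ)) := rpow_le_rpow_of_exponent_le hn' (by push_cast; linarith)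
    _ = ((n : ℝ) ^ β) ^ 3 := rpow_mul_natCast (by positivity) _ _
    _ ≤ (⌈(n : ℝ) ^ β⌉₊ : ℝ) ^ 3 := by gcongr; exact Nat.le_ceil _

lemma div_rpow_le_of_le_pow_three {x m γ : ℝ} (hx : 0 ≤ x) (hm : 1 ≤ m) (hxm : x ≤ m ^ 3)
    (hγ₀ : 0 ≤ γ) (hγ : γ ≤ 1 / 2) : (x / m) ^ γ ≤ m := by
  have hm₀ : 0 < m := by linarith
  have hdiv : x / m ≤ m ^ (2 : ℝ) := by
    rw [div_le_iff₀ hm₀, rpow_two]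
    linarith
  calc (x / m) ^ γ ≤ (m ^ (2 : ℝ)) ^ γ := by gcongr
    _ = m ^ (2 * γ) := (rpow_mul hm₀.le _ _).symm
    _ ≤ m ^ (1 : ℝ) := rpow_le_rpow_of_exponent_le hm (by linarith)
    _ = m := rpow_one _

lemma natCeil_div_rpow_le {n : ℕ} (hn : 1 ≤ n) {β γ : ℝ} (hβ : 1 / 3 ≤ β) (hγ₀ : 0 ≤ γ)
    (hγ : γ ≤ 1 / 2) : ⌈((n : ℝ) / ⌈(n : ℝ) ^ β⌉₊) ^ γ⌉₊ ≤ ⌈(n : ℝ) ^ β⌉₊ := by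
  have hm : (1 : ℝ) ≤ ⌈(n : ℝ) ^ β⌉₊ := by
    exact_mod_cast Nat.one_le_ceil_iff.mpr (by positivity)
  exact Nat.ceil_le.mpr <|
    div_rpow_le_of_le_pow_three (Nat.cast_nonneg n) hm (le_natCeil_rpow_pow_three hn hβ) hγ₀ hγ

/-- **Key estimate for Regimes B-1, B-2, B-3 in the proof of Lemma 5**: with
`m_n = ⌈n^β⌉` (where `1/3 ≤ β < 1`), `N_n = ⌈(n/m_n)^{1/2−ε}⌉` (where `0 < ε < 1/2`),
and i.i.d. `{0,1}`-valued `B_1, …, B_{N_n}` with `P(B_j = 1) = 1/m_n`, one has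
`m_n² · P(∑ B_j ≥ log n) → 0` as `n → ∞`. -/
theorem stmt_8
    (β ε : ℝ) (hβ0 : 1 / 3 ≤ β) (hβ1 : β < 1) (hε0 : 0 < ε) (hε1 : ε < 1 / 2)
    (Ω : ℕ → Type*) [∀ n, MeasurableSpace (Ω n)]
    (μ : (n : ℕ) → Measure (Ω n)) [∀ n, IsProbabilityMeasure (μ n)]
    (B : (n : ℕ) → Fin ⌈((n : ℝ) / (⌈(n : ℝ) ^ β⌉₊ : ℝ)) ^ (1 / 2 - ε)⌉₊ → Ω n → ℝ)
    (hmeas : ∀ n j, Measurable (B n j))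
    (hval : ∀ n j ω, B n j ω = 0 ∨ B n j ω = 1)
    (hprob : ∀ n : ℕ, 2 ≤ n → ∀ j,
      μ n {ω | B n j ω = 1} = ((⌈(n : ℝ) ^ β⌉₊ : ℝ≥0∞))⁻¹)
    (hindep : ∀ n, iIndepFun (B n) (μ n)) :
    Tendsto
      (fun n : ℕ => ((⌈(n : ℝ) ^ β⌉₊ : ℝ)) ^ 2
        * (μ n {ω | Real.log n ≤ ∑ j, B n j ω}).toReal)
      atTop (nhds 0) := by
  refine squeeze_zero' (g := fun n : ℕ => exp (exp 3 - 1) / n)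
    (Eventually.of_forall fun n => by positivity) ?_ (tendsto_const_div_atTop_nhds_zero_nat _)
  filter_upwards [eventually_ge_atTop 2] with n hn
  set m := ⌈(n : ℝ) ^ β⌉₊
  have hmn : (m : ℝ) ≤ n := by exact_mod_cast natCeil_rpow_le_self (by omega) hβ1.le
  have hNm : ((Fintype.card (Fin ⌈((n : ℝ) / m) ^ (1 / 2 - ε)⌉₊) : ℝ)) ≤ m := by
    rw [Fintype.card_fin]
    exact_mod_cast natCeil_div_rpow_le (by omega) hβ0 (by linarith) (by linarith)
  have hp : ∀ j, (μ n).real {ω | B n j ω = 1} ≤ (m : ℝ)⁻¹ := fun j => by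
    simp [measureReal_def, hprob n hn j, m]
  have hcard : (m : ℝ)⁻¹ * Fintype.card (Fin ⌈((n : ℝ) / m) ^ (1 / 2 - ε)⌉₊) ≤ 1 :=
    inv_mul_le_one_of_le₀ hNm (by positivity)
  have hexp : exp (-3 * log n) = ((n : ℝ) ^ 3)⁻¹ := by
    rw [neg_mul, exp_neg, show (3 : ℝ) * log n = log ((n : ℝ) ^ 3) by rw [log_pow]; norm_num,
      exp_log (by positivity)]
  have hP : (μ n {ω | log n ≤ ∑ j, B n j ω}).toReal ≤ exp (exp 3 - 1) / n ^ 3 := by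
    refine (measureReal_le_sum_le_of_zero_or_one (hindep n) (hmeas n) (hval n) (t := 3)
      (by norm_num) hp (log n)).trans ?_
    have hc : 0 ≤ exp 3 - 1 := by linarith [one_le_exp (show (0 : ℝ) ≤ 3 by norm_num)]
    rw [mul_assoc, exp_add, hexp, inv_mul_eq_div]
    gcongr
    exact mul_le_of_le_one_right hc hcard
  calc (m : ℝ) ^ 2 * (μ n {ω | log n ≤ ∑ j, B n j ω}).toReal
      ≤ (n : ℝ) ^ 2 * (exp (exp 3 - 1) / n ^ 3) := by gcongr
    _ = exp (exp 3 - 1) / n := by field_simp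
end
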